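/- If S_*(ZG) is a subgroup of U(ZG), then the set t(G) of torsion elements of G is a subgroup of G. -/

import Mathlib

/-- The canonical involution on the group ring `K[G]`, sending `∑ a_g g` to `∑ a_g g⁻¹`. -/
noncomputable def gstar {K G : Type*} [CommRing K] [Group G] (x : MonoidAlgebra K G) :
    MonoidAlgebra K G := MonoidAlgebra.ofCoeff (Finsupp.mapDomain (fun g => g⁻¹) x.coeff)

/-- `x̂ = 1 + x + ⋯ + x^(n-1)` in the integral group ring, where `n = orderOf x`. -/
noncomputable def hatZ {G : Type*} [Group G] (x : G) : MonoidAlgebra ℤ G :=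
  ∑ i ∈ Finset.range (orderOf x), (MonoidAlgebra.of ℤ G x) ^ i

/-!
If the symmetric units form a group, any two of them commute, because `(uv)^* = v^* u^*`. For
`a` with `a² = 0` and `b = a^*`, applying this to `u u^*` and `u^* u`, where `u = 1 + a`, gives
`2 aba = 2 bab`, so `aba = bab`. Then `(ab)(ab)^* = (aba)b = ba b² = 0`, and positivity of the
trace, `τ(z z^*) = Σ z_g²`, gives `ab = a a^* = 0` and then `a = 0`.

For `x` of finite order and any `h`, `a = (x - 1) h x̂` squares to zero because `x̂ (x - 1) = 0`.
So `a = 0`, that is `x` fixes `h x̂`, which forces `h⁻¹ x h ∈ ⟨x⟩`. Finite cyclic subgroups are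
therefore normal, and a product `xy` of torsion elements is torsion since it agrees with `y`
modulo `⟨x⟩`.
-/

open MonoidAlgebra Subgroup

instance {K G : Type*} [Semiring K] [IsAddTorsionFree K] : IsAddTorsionFree (MonoidAlgebra K G) :=
  Function.Injective.isAddTorsionFree (coeffAddEquiv (R := K) (M := G)).toAddMonoidHom
    coeffAddEquiv.injective

section Involution
variable {K G : Type*} [CommRing K] [Group G]

lemma coeff_gstar (x : MonoidAlgebra K G) (g : G) : (gstar x).coeff g = x.coeff g⁻¹ := by
  rw [gstar, coeff_ofCoeff, ← Finsupp.mapDomain_apply inv_injective x.coeff g⁻¹, inv_inv]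

lemma gstar_single (g : G) (r : K) : gstar (single g r) = single g⁻¹ r := mapDomain_single

lemma gstar_zero : gstar (0 : MonoidAlgebra K G) = 0 := mapDomain_zero _

lemma gstar_add (x y : MonoidAlgebra K G) : gstar (x + y) = gstar x + gstar y :=
  mapDomain_add _ x y

lemma gstar_gstar (x : MonoidAlgebra K G) : gstar (gstar x) = x := by
  ext g
  simp [coeff_gstar]

lemma gstar_mul (x y : MonoidAlgebra K G) : gstar (x * y) = gstar y * gstar x := by
  induction x using MonoidAlgebra.induction_linear with
  | zero => simp [gstar_zero]
  | add x x' hx hx' => rw [add_mul, gstar_add, hx, hx', gstar_add, mul_add]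
  | single g r =>
    induction y using MonoidAlgebra.induction_linear with
    | zero => simp [gstar_zero]
    | add y y' hy hy' => rw [mul_add, gstar_add, hy, hy', gstar_add, add_mul]
    | single h s => simp [gstar_single, mul_comm r s]

noncomputable abbrev gstarStarRing : StarRing (MonoidAlgebra K G) where
  star := gstar
  star_involutive := gstar_gstar
  star_mul := gstar_mul
  star_add := gstar_add

end Involution

attribute [local instance] gstarStarRing

section SquareZero
variable {R : Type*} [Ring R]

lemma one_add_mul_one_add_mul_swap_of_mul_self_eq_zero {a b : R} (ha : a * a = 0)
    (hb : b * b = 0) :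
    (1 + a) * (1 + b) * ((1 + b) * (1 + a))
      = 1 + 2 * (a + b + a * b + b * a) + 2 * (a * b * a) := by
  have h : (1 + a) * (1 + b) * ((1 + b) * (1 + a))
      = 1 + 2 * (a + b + a * b + b * a) + 2 * (a * b * a)
        + a * a + (1 + a) * (b * b) * (1 + a) := by
    noncomm_ring
  rw [h, ha, hb]
  noncomm_ring

lemma mul_mul_eq_mul_mul_of_commute [IsAddTorsionFree R] {a b : R} (ha : a * a = 0)
    (hb : b * b = 0) (h : Commute ((1 + a) * (1 + b)) ((1 + b) * (1 + a))) :
    a * b * a = b * a * b := by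
  have h2 := h.eq
  have hsym : b + a + b * a + a * b = a + b + a * b + b * a := by abel
  rw [one_add_mul_one_add_mul_swap_of_mul_self_eq_zero ha hb,
    one_add_mul_one_add_mul_swap_of_mul_self_eq_zero hb ha, hsym, add_right_inj] at h2
  exact nsmul_right_injective two_ne_zero (by simpa only [two_nsmul, two_mul] using h2)

variable [StarRing R]

lemma commute_of_isSelfAdjoint (H : Subgroup Rˣ)
    (hH : ∀ u : Rˣ, u ∈ H ↔ IsSelfAdjoint (u : R)) {u v : Rˣ}
    (hu : IsSelfAdjoint (u : R)) (hv : IsSelfAdjoint (v : R)) : Commute (u : R) v :=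
  (hu.commute_iff hv).2 ((hH (u * v)).1 (H.mul_mem ((hH u).2 hu) ((hH v).2 hv)))

lemma eq_zero_of_mul_self_eq_zero_of_isSelfAdjoint [IsAddTorsionFree R]
    (hpos : ∀ z : R, z * star z = 0 → z = 0) (H : Subgroup Rˣ)
    (hH : ∀ u : Rˣ, u ∈ H ↔ IsSelfAdjoint (u : R)) {a : R} (ha : a * a = 0) : a = 0 := by
  set b := star a
  have hb : b * b = 0 := by rw [← star_mul, ha, star_zero]
  let u : Rˣ := (IsNilpotent.isUnit_one_add ⟨2, by rw [sq, ha]⟩).unit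
  have hcomm : Commute ((1 + a) * (1 + b)) ((1 + b) * (1 + a)) := by
    simpa [u, star_add] using commute_of_isSelfAdjoint H hH (u := u * star u) (v := star u * u)
      (IsSelfAdjoint.mul_star_self _) (IsSelfAdjoint.star_mul_self _)
  have hab : a * b = 0 := hpos _ <| by
    rw [star_mul, star_star, ← mul_assoc, mul_mul_eq_mul_mul_of_commute ha hb hcomm, mul_assoc,
      hb, mul_zero]
  exact hpos a hab

end SquareZero

section Positivity
variable {K G : Type*} [CommRing K] [Group G]

lemma coeff_star (x : MonoidAlgebra K G) (g : G) : (star x).coeff g = x.coeff g⁻¹ :=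
  coeff_gstar x g

lemma coeff_one_mul_star (z : MonoidAlgebra K G) :
    (z * star z).coeff 1 = z.coeff.sum fun _ r => r * r := by
  rw [coeff_mul_apply_left]
  refine Finsupp.sum_congr fun g _ => ?_
  rw [mul_one, coeff_star, inv_inv]

lemma eq_zero_of_mul_star_self_eq_zero [LinearOrder K] [IsStrictOrderedRing K]
    {z : MonoidAlgebra K G} (hz : z * star z = 0) : z = 0 := by
  ext g
  by_contra hg
  rw [coeff_zero, Finsupp.coe_zero, Pi.zero_apply] at hg
  have hsum : (z.coeff.sum fun _ r => r * r) = 0 := by rw [← coeff_one_mul_star, hz]; rfl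
  have hle : z.coeff g * z.coeff g ≤ z.coeff.sum fun _ r => r * r :=
    Finset.single_le_sum (fun h _ => mul_self_nonneg (z.coeff h)) (Finsupp.mem_support_iff.2 hg)
  exact (mul_self_pos.2 hg).not_ge (hsum ▸ hle)

end Positivity

section HatZ
variable {G : Type*} [Group G]

lemma hatZ_mul_of_sub_one (x : G) : hatZ x * (of ℤ G x - 1) = 0 := by
  rw [hatZ, geom_sum_mul, ← map_pow, pow_orderOf_eq_one, map_one, sub_self]

lemma coeff_hatZ [DecidableEq G] (x g : G) :
    (hatZ x).coeff g = ∑ i ∈ Finset.range (orderOf x), if x ^ i = g then 1 else 0 := by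
  simp [hatZ, coeff_sum, Finsupp.single_apply]

lemma coeff_hatZ_one {x : G} (hx : IsOfFinOrder x) : (hatZ x).coeff 1 = 1 := by
  classical
  rw [coeff_hatZ, Finset.sum_eq_single_of_mem 0 (Finset.mem_range.2 hx.orderOf_pos)]
  · simp
  · intro i hi hi0
    rw [if_neg (pow_ne_one_of_lt_orderOf hi0 (Finset.mem_range.1 hi))]

lemma mem_zpowers_of_coeff_hatZ_ne_zero {x g : G} (hg : (hatZ x).coeff g ≠ 0) :
    g ∈ zpowers x := by
  classical
  rw [coeff_hatZ] at hg
  obtain ⟨i, -, hi⟩ := Finset.exists_ne_zero_of_sum_ne_zero hg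
  rw [← of_not_not (fun h => hi (if_neg h))]
  exact pow_mem (mem_zpowers x) i

lemma mem_zpowers_of_of_mul_hatZ {x y : G} (hx : IsOfFinOrder x)
    (hy : of ℤ G y * hatZ x = hatZ x) : y ∈ zpowers x := by
  refine mem_zpowers_of_coeff_hatZ_ne_zero ?_
  rw [← hy, of_apply, coeff_single_mul_apply, inv_mul_cancel, coeff_hatZ_one hx]
  norm_num

end HatZ

lemma zpowers_normal_of_conj_mem {G : Type*} [Group G] {x : G}
    (h : ∀ g : G, g * x * g⁻¹ ∈ zpowers x) : (zpowers x).Normal where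
  conj_mem y hy g := by
    obtain ⟨k, rfl⟩ := mem_zpowers_iff.1 hy
    rw [← conj_zpow]
    exact zpow_mem (h g) k

lemma IsOfFinOrder.mul_of_zpowers_normal {G : Type*} [Group G] {x y : G} (hx : IsOfFinOrder x)
    (hy : IsOfFinOrder y) [(zpowers x).Normal] : IsOfFinOrder (x * y) := by
  obtain ⟨n, hn, hyn⟩ :=
    isOfFinOrder_iff_pow_eq_one.1 ((QuotientGroup.mk' (zpowers x)).isOfFinOrder hy)
  have hxy : ((x * y : G) : G ⧸ zpowers x) = y := by
    rw [QuotientGroup.mk_mul, (QuotientGroup.eq_one_iff x).2 (mem_zpowers x), one_mul]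
  have hmem : (x * y) ^ n ∈ zpowers x := by
    rw [← QuotientGroup.eq_one_iff, QuotientGroup.mk_pow, hxy]
    exact hyn
  exact (hx.of_mem_zpowers hmem).of_pow hn.ne'

section GroupRing
variable {G : Type*} [Group G]

lemma conj_mem_zpowers_of_isOfFinOrder (H : Subgroup (MonoidAlgebra ℤ G)ˣ)
    (hH : ∀ u : (MonoidAlgebra ℤ G)ˣ, u ∈ H ↔ gstar (u : MonoidAlgebra ℤ G) = u)
    {x : G} (hx : IsOfFinOrder x) (h : G) : h⁻¹ * x * h ∈ zpowers x := by
  set a := (of ℤ G x - 1) * of ℤ G h * hatZ x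
  have ha : a * a = 0 := by
    calc a * a
        = (of ℤ G x - 1) * of ℤ G h * (hatZ x * (of ℤ G x - 1)) * (of ℤ G h * hatZ x) := by
          simp only [a, mul_assoc]
      _ = 0 := by rw [hatZ_mul_of_sub_one, mul_zero, zero_mul]
  have ha0 : a = 0 := eq_zero_of_mul_self_eq_zero_of_isSelfAdjoint
    (fun _ => eq_zero_of_mul_star_self_eq_zero) H hH ha
  refine mem_zpowers_of_of_mul_hatZ hx ?_
  have hfix : of ℤ G x * (of ℤ G h * hatZ x) = of ℤ G h * hatZ x := by
    rw [← sub_eq_zero, ← sub_one_mul, ← mul_assoc]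
    exact ha0
  rw [map_mul, map_mul, mul_assoc, mul_assoc, hfix, ← mul_assoc, ← map_mul, inv_mul_cancel,
    map_one, one_mul]

lemma zpowers_normal_of_isOfFinOrder (H : Subgroup (MonoidAlgebra ℤ G)ˣ)
    (hH : ∀ u : (MonoidAlgebra ℤ G)ˣ, u ∈ H ↔ gstar (u : MonoidAlgebra ℤ G) = u)
    {x : G} (hx : IsOfFinOrder x) : (zpowers x).Normal :=
  zpowers_normal_of_conj_mem fun g => by
    simpa using conj_mem_zpowers_of_isOfFinOrder H hH hx g⁻¹

end GroupRing

/-- If the symmetric units of ℤG form a subgroup, then the torsion elements of G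
form a subgroup of G. -/
theorem stmt_12 {G : Type*} [Group G]
    (H : Subgroup (MonoidAlgebra ℤ G)ˣ)
    (hH : ∀ u : (MonoidAlgebra ℤ G)ˣ, u ∈ H ↔ gstar (u : MonoidAlgebra ℤ G) = u) :
    ∃ T : Subgroup G, ∀ g : G, g ∈ T ↔ IsOfFinOrder g :=
  ⟨{ carrier := {g | IsOfFinOrder g}
     one_mem' := IsOfFinOrder.one
     inv_mem' := IsOfFinOrder.inv
     mul_mem' := fun hx hy =>
       have := zpowers_normal_of_isOfFinOrder H hH hx
       hx.mul_of_zpowers_normal hy }, fun _ => Iff.rfl⟩
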